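/- The action of the local plactic algebra P_N on k[x_1,...,x_{N-1},x_0] by particle-moving operators factors through the partic algebra; that is, the operators ρ(a_i) satisfy ρ(a_i)ρ(a_{i-1})ρ(a_{i+1})ρ(a_i) = ρ(a_{i+1})ρ(a_i)ρ(a_{i-1})ρ(a_i) for all 2 ≤ i ≤ N-2. -/
import Mathlib


/-- The particle-moving operator `ρ(a_i)` on `K[x_1, …, x_{N-1}, x_0]` (realized as
`MvPolynomial (Fin N) K`, where the variable of index `0` is `x_0`): it sends a monomial with
positive exponent at `x_i` to the monomial with the exponent of `x_i` decreased by `1` and that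
of `x_{i+1}` (that is, `x_0` when `i = N-1`) increased by `1`, and kills other monomials. -/
noncomputable def rho (K : Type*) [Field K] (N : ℕ) (i : ℕ) :
    Module.End K (MvPolynomial (Fin N) K) :=
  (MvPolynomial.basisMonomials (Fin N) K).constr K fun m =>
    if h : 1 ≤ i ∧ i < N then
      if 0 < m ⟨i, h.2⟩ then
        (MvPolynomial.basisMonomials (Fin N) K)
          ((m.update ⟨i, h.2⟩ (m ⟨i, h.2⟩ - 1)).update
            ⟨(i + 1) % N, Nat.mod_lt _ (by omega)⟩
            ((m.update ⟨i, h.2⟩ (m ⟨i, h.2⟩ - 1)) ⟨(i + 1) % N, Nat.mod_lt _ (by omega)⟩ + 1))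
      else 0
    else 0

lemma rho_apply (K : Type*) [Field K] {N j : ℕ} (hj1 : 1 ≤ j) (hj2 : j < N)
    (s t : Fin N) (hs : (s : ℕ) = j) (ht : (t : ℕ) = (j + 1) % N) (m : Fin N →₀ ℕ) :
    rho K N j (MvPolynomial.basisMonomials (Fin N) K m) =
      if 0 < m s then
        (MvPolynomial.basisMonomials (Fin N) K)
          ((m.update s (m s - 1)).update t ((m.update s (m s - 1)) t + 1))
      else 0 := by
  have hs' : s = ⟨j, hj2⟩ := Fin.ext hs
  have ht' : t = ⟨(j + 1) % N, Nat.mod_lt _ (by omega)⟩ := Fin.ext ht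
  subst hs'
  rw [ht', rho, Module.Basis.constr_basis, dif_pos ⟨hj1, hj2⟩]

lemma upd2_apply {N : ℕ} (m : Fin N →₀ ℕ) (s t x : Fin N) (u v : ℕ) :
    ((m.update s u).update t v) x = if x = t then v else if x = s then u else m x := by
  simp [Finsupp.coe_update, Function.update_apply]

lemma upd_apply {N : ℕ} (m : Fin N →₀ ℕ) (s t x : Fin N) :
    ((m.update s (m s - 1)).update t ((m.update s (m s - 1)) t + 1)) x
      = if x = t then (if t = s then m s - 1 else m t) + 1
        else if x = s then m s - 1 else m x := by
  simp [Finsupp.coe_update, Function.update_apply]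

/-- The particle-moving operators satisfy the partic relation
`ρ(a_i)ρ(a_{i-1})ρ(a_{i+1})ρ(a_i) = ρ(a_{i+1})ρ(a_i)ρ(a_{i-1})ρ(a_i)` for `2 ≤ i ≤ N-2`. -/
theorem stmt5 (K : Type*) [Field K] (N : ℕ) (hN : 4 ≤ N) (i : ℕ)
    (h1 : 2 ≤ i) (h2 : i ≤ N - 2) :
    rho K N i * rho K N (i - 1) * rho K N (i + 1) * rho K N i =
      rho K N (i + 1) * rho K N i * rho K N (i - 1) * rho K N i := by
  have hiN : i < N := by omega
  have hi1 : i + 1 < N := by omega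
  have him : i - 1 < N := by omega
  have hd : (i + 2) % N < N := Nat.mod_lt _ (by omega)
  have hmod : (i + 2) % N = 0 ∨ (i + 2) % N = i + 2 := by
    rcases Nat.lt_or_ge (i + 2) N with h | h
    · exact Or.inr (Nat.mod_eq_of_lt h)
    · left
      have : i + 2 = N := by omega
      rw [show i + 2 = N by omega, Nat.mod_self]
  set fa : Fin N := ⟨i - 1, him⟩ with hfa
  set fb : Fin N := ⟨i, hiN⟩ with hfb
  set fc : Fin N := ⟨i + 1, hi1⟩ with hfc
  set fd : Fin N := ⟨(i + 2) % N, hd⟩ with hfd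
  have hsb : (fb : ℕ) = i := rfl
  have htc : (fc : ℕ) = (i + 1) % N := (Nat.mod_eq_of_lt hi1).symm
  have hsa : (fa : ℕ) = i - 1 := rfl
  have htb : (fb : ℕ) = (i - 1 + 1) % N := by
    rw [hfb]
    show i = _
    rw [Nat.sub_add_cancel (by omega), Nat.mod_eq_of_lt hiN]
  have hsc : (fc : ℕ) = i + 1 := rfl
  have htd : (fd : ℕ) = (i + 1 + 1) % N := by rw [hfd]
  refine (MvPolynomial.basisMonomials (Fin N) K).ext fun m => ?_
  simp only [Module.End.mul_apply]
  rw [rho_apply K (by omega) hiN fb fc hsb htc m]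
  by_cases hb : 0 < m fb
  · rw [if_pos hb]
    set m1 := (m.update fb (m fb - 1)).update fc ((m.update fb (m fb - 1)) fc + 1) with hm1
    rw [rho_apply K (by omega) hi1 fc fd hsc htd m1]
    have hc1 : 0 < m1 fc := by
      rw [hm1, upd_apply, if_pos rfl]; omega
    rw [if_pos hc1]
    set m2 := (m1.update fc (m1 fc - 1)).update fd ((m1.update fc (m1 fc - 1)) fd + 1) with hm2
    rw [rho_apply K (by omega) him fa fb hsa htb m1]
    have hab : fa ≠ fb := Fin.ne_of_val_ne (by show i - 1 ≠ i; omega)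
    have hac : fa ≠ fc := Fin.ne_of_val_ne (by show i - 1 ≠ i + 1; omega)
    have had : fa ≠ fd := Fin.ne_of_val_ne (by show i - 1 ≠ (i + 2) % N; omega)
    have h1a : m1 fa = m fa := by
      rw [hm1, upd_apply, if_neg hac, if_neg hab]
    have h2a : m2 fa = m fa := by
      rw [hm2, upd_apply, if_neg had, if_neg hac, h1a]
    rw [rho_apply K (by omega) him fa fb hsa htb m2]
    by_cases ha : 0 < m fa
    · rw [if_pos (show 0 < m1 fa from h1a.symm ▸ ha),
        if_pos (show 0 < m2 fa from h2a.symm ▸ ha)]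
      set m3 := (m2.update fa (m2 fa - 1)).update fb ((m2.update fa (m2 fa - 1)) fb + 1) with hm3
      set n2 := (m1.update fa (m1 fa - 1)).update fb ((m1.update fa (m1 fa - 1)) fb + 1) with hn2
      rw [rho_apply K (by omega) hiN fb fc hsb htc m3]
      have h3b : 0 < m3 fb := by rw [hm3, upd_apply, if_pos rfl]; omega
      rw [if_pos h3b]
      rw [rho_apply K (by omega) hiN fb fc hsb htc n2]
      have hn2b : 0 < n2 fb := by rw [hn2, upd_apply, if_pos rfl]; omega
      rw [if_pos hn2b]
      set n3 := (n2.update fb (n2 fb - 1)).update fc ((n2.update fb (n2 fb - 1)) fc + 1) with hn3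
      rw [rho_apply K (by omega) hi1 fc fd hsc htd n3]
      have hn3c : 0 < n3 fc := by rw [hn3, upd_apply, if_pos rfl]; omega
      rw [if_pos hn3c]
      -- pointwise values
      have hbc : fb ≠ fc := Fin.ne_of_val_ne (by show i ≠ i + 1; omega)
      have hbd : fb ≠ fd := Fin.ne_of_val_ne (by show i ≠ (i + 2) % N; omega)
      have hcd : fc ≠ fd := Fin.ne_of_val_ne (by show i + 1 ≠ (i + 2) % N; omega)
      have h1b : m1 fb = m fb - 1 := by rw [hm1, upd_apply, if_neg hbc, if_pos rfl]
      have h1c : m1 fc = m fc + 1 := by rw [hm1, upd_apply, if_pos rfl, if_neg (Ne.symm hbc)]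
      have h1d : m1 fd = m fd := by
        rw [hm1, upd_apply, if_neg (Ne.symm hcd), if_neg (Ne.symm hbd)]
      have h1x : ∀ x, x ≠ fb → x ≠ fc → m1 x = m x := fun x h h' => by
        rw [hm1, upd_apply, if_neg h', if_neg h]
      have h2b : m2 fb = m fb - 1 := by rw [hm2, upd_apply, if_neg hbd, if_neg hbc, h1b]
      have h2c : m2 fc = m fc := by rw [hm2, upd_apply, if_neg hcd, if_pos rfl, h1c]; omega
      have h2d : m2 fd = m fd + 1 := by
        rw [hm2, upd_apply, if_pos rfl, if_neg (Ne.symm hcd), h1d]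
      have h2x : ∀ x, x ≠ fb → x ≠ fc → x ≠ fd → m2 x = m x := fun x h h' h'' => by
        rw [hm2, upd_apply, if_neg h'', if_neg h', h1x x h h']
      have h3a : m3 fa = m fa - 1 := by rw [hm3, upd_apply, if_neg hab, if_pos rfl, h2a]
      have h3b' : m3 fb = m fb := by
        rw [hm3, upd_apply, if_pos rfl, if_neg (Ne.symm hab), h2b]; omega
      have h3c : m3 fc = m fc := by
        rw [hm3, upd_apply, if_neg (Ne.symm hbc), if_neg (Ne.symm hac), h2c]
      have h3d : m3 fd = m fd + 1 := by
        rw [hm3, upd_apply, if_neg (Ne.symm hbd), if_neg (Ne.symm had), h2d]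
      have h3x : ∀ x, x ≠ fa → x ≠ fb → x ≠ fc → x ≠ fd → m3 x = m x := fun x h0 h h' h'' => by
        rw [hm3, upd_apply, if_neg h, if_neg h0, h2x x h h' h'']
      have k2a : n2 fa = m fa - 1 := by rw [hn2, upd_apply, if_neg hab, if_pos rfl, h1a]
      have k2b : n2 fb = m fb := by
        rw [hn2, upd_apply, if_pos rfl, if_neg (Ne.symm hab), h1b]; omega
      have k2c : n2 fc = m fc + 1 := by
        rw [hn2, upd_apply, if_neg (Ne.symm hbc), if_neg (Ne.symm hac), h1c]
      have k2d : n2 fd = m fd := by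
        rw [hn2, upd_apply, if_neg (Ne.symm hbd), if_neg (Ne.symm had), h1d]
      have k2x : ∀ x, x ≠ fa → x ≠ fb → x ≠ fc → n2 x = m x := fun x h0 h h' => by
        rw [hn2, upd_apply, if_neg h, if_neg h0, h1x x h h']
      have k3a : n3 fa = m fa - 1 := by rw [hn3, upd_apply, if_neg hac, if_neg hab, k2a]
      have k3b : n3 fb = m fb - 1 := by rw [hn3, upd_apply, if_neg hbc, if_pos rfl, k2b]
      have k3c : n3 fc = m fc + 2 := by
        rw [hn3, upd_apply, if_pos rfl, if_neg (Ne.symm hbc), k2c]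
      have k3d : n3 fd = m fd := by
        rw [hn3, upd_apply, if_neg (Ne.symm hcd), if_neg (Ne.symm hbd), k2d]
      have k3x : ∀ x, x ≠ fa → x ≠ fb → x ≠ fc → x ≠ fd → n3 x = m x := fun x h0 h h' h'' => by
        rw [hn3, upd_apply, if_neg h', if_neg h, k2x x h0 h h']
      congr 1
      ext x
      rw [upd_apply m3 fb fc x, upd_apply n3 fc fd x]
      by_cases hxc : x = fc
      · subst hxc
        rw [if_pos rfl, if_neg hcd, if_pos rfl, if_neg (Ne.symm hbc), h3c, k3c]; omega
      · by_cases hxb : x = fb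
        · subst hxb
          rw [if_neg hbc, if_pos rfl, if_neg hbd, if_neg hbc, h3b', k3b]
        · by_cases hxd : x = fd
          · subst hxd
            rw [if_neg (Ne.symm hcd), if_neg (Ne.symm hbd), if_pos rfl,
              if_neg (Ne.symm hcd), h3d, k3d]
          · by_cases hxa : x = fa
            · subst hxa
              rw [if_neg hac, if_neg hab, if_neg had, if_neg hac, h3a, k3a]
            · rw [if_neg hxc, if_neg hxb, if_neg hxd, if_neg hxc,
                h3x x hxa hxb hxc hxd, k3x x hxa hxb hxc hxd]
    · rw [if_neg (show ¬ 0 < m1 fa from h1a.symm ▸ ha),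
        if_neg (show ¬ 0 < m2 fa from h2a.symm ▸ ha)]
      simp
  · rw [if_neg hb]
    simp
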